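/- Let X be a pointed metric space. A sequence in Lip₀(X) converges to zero in the topology τ_γ if and only if it is bounded in the Lipschitz norm and converges to zero in the compact-open topology τ₀. -/

import Mathlib

open Filter Topology Set Pointwise

set_option linter.unusedSectionVars false
set_option linter.unusedVariables false

noncomputable section

namespace LipApprox

variable (X : Type*) [MetricSpace X] (x₀ : X)
variable (F : Type*) [NormedAddCommGroup F] [NormedSpace ℝ F]

/-- The Lipschitz maps `X → F` vanishing at the base point, as a submodule of `X → F`. -/
def lip0Submodule : Submodule ℝ (X → F) where
  carrier := {f | (∃ K, LipschitzWith K f) ∧ f x₀ = 0}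
  add_mem' := by
    rintro f g ⟨⟨Kf, hf⟩, hf0⟩ ⟨⟨Kg, hg⟩, hg0⟩
    exact ⟨⟨Kf + Kg, hf.add hg⟩, by simp [hf0, hg0]⟩
  zero_mem' := ⟨⟨0, LipschitzWith.const 0⟩, rfl⟩
  smul_mem' := by
    rintro c f ⟨⟨K, hf⟩, hf0⟩
    exact ⟨⟨‖c‖₊ * K, (lipschitzWith_smul c).comp hf⟩, by simp [hf0]⟩

/-- The space `Lip₀(X, F)` of Lipschitz maps from `X` to `F` vanishing at the base point. -/
def lip0 : Type _ := ↥(lip0Submodule X x₀ F)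

instance : AddCommGroup (lip0 X x₀ F) :=
  inferInstanceAs (AddCommGroup ↥(lip0Submodule X x₀ F))

instance : Module ℝ (lip0 X x₀ F) :=
  inferInstanceAs (Module ℝ ↥(lip0Submodule X x₀ F))

variable {X x₀ F}

/-- The underlying function of an element of `Lip₀(X, F)`. -/
def toFun' (f : lip0 X x₀ F) : X → F := f.1

lemma exists_lip (f : lip0 X x₀ F) : ∃ K, LipschitzWith K (toFun' f) := f.2.1

lemma apply_base (f : lip0 X x₀ F) : toFun' f x₀ = 0 := f.2.2

lemma toFun'_add (f g : lip0 X x₀ F) : toFun' (f + g) = toFun' f + toFun' g := rfl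
lemma toFun'_neg (f : lip0 X x₀ F) : toFun' (-f) = -toFun' f := rfl
lemma toFun'_smul (c : ℝ) (f : lip0 X x₀ F) : toFun' (c • f) = c • toFun' f := rfl
lemma toFun'_zero : toFun' (0 : lip0 X x₀ F) = 0 := rfl

variable (X x₀ F) in
/-- The Lipschitz norm of an element of `Lip₀(X, F)`. -/
def lipNorm (f : lip0 X x₀ F) : ℝ :=
  ⨆ p : X × X, ‖toFun' f p.1 - toFun' f p.2‖ / dist p.1 p.2

lemma ratio_le (f : lip0 X x₀ F) {K : NNReal} (hK : LipschitzWith K (toFun' f))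
    (p : X × X) : ‖toFun' f p.1 - toFun' f p.2‖ / dist p.1 p.2 ≤ K := by
  rcases eq_or_ne p.1 p.2 with h | h
  · simp [h]
  · rw [div_le_iff₀ (dist_pos.2 h), ← dist_eq_norm]
    exact hK.dist_le_mul p.1 p.2

lemma bddAbove_ratio (f : lip0 X x₀ F) :
    BddAbove (Set.range fun p : X × X =>
      ‖toFun' f p.1 - toFun' f p.2‖ / dist p.1 p.2) := by
  obtain ⟨K, hK⟩ := exists_lip f
  exact ⟨K, by rintro r ⟨p, rfl⟩; exact ratio_le f hK p⟩

lemma nonempty_pairs (x₀ : X) : Nonempty (X × X) := ⟨(x₀, x₀)⟩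

lemma ratio_le_lipNorm (f : lip0 X x₀ F) (p : X × X) :
    ‖toFun' f p.1 - toFun' f p.2‖ / dist p.1 p.2 ≤ lipNorm X x₀ F f :=
  le_ciSup (bddAbove_ratio f) p

lemma lipNorm_nonneg (f : lip0 X x₀ F) : 0 ≤ lipNorm X x₀ F f := by
  have := ratio_le_lipNorm (x₀ := x₀) f (x₀, x₀)
  simpa using this

lemma norm_sub_le_lipNorm (f : lip0 X x₀ F) (x y : X) :
    ‖toFun' f x - toFun' f y‖ ≤ lipNorm X x₀ F f * dist x y := by
  rcases eq_or_ne x y with rfl | h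
  · simp
  · have := ratio_le_lipNorm (x₀ := x₀) f (x, y)
    rw [div_le_iff₀ (dist_pos.2 h)] at this
    simpa using this

instance : NormedAddCommGroup (lip0 X x₀ F) :=
  AddGroupNorm.toNormedAddCommGroup
    { toFun := lipNorm X x₀ F
      map_zero' := by
        haveI : Nonempty (X × X) := nonempty_pairs x₀
        have h0 : ∀ p : X × X,
            ‖toFun' (0 : lip0 X x₀ F) p.1 - toFun' (0 : lip0 X x₀ F) p.2‖ /
              dist p.1 p.2 = 0 := by
          intro p; rw [toFun'_zero]; simp
        simp only [lipNorm, h0, ciSup_const]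
      add_le' := by
        intro f g
        haveI : Nonempty (X × X) := nonempty_pairs x₀
        apply ciSup_le
        intro p
        rcases eq_or_ne p.1 p.2 with h | h
        · simp only [h, dist_self, div_zero]
          exact add_nonneg (lipNorm_nonneg f) (lipNorm_nonneg g)
        · have hnum : ‖toFun' (f + g) p.1 - toFun' (f + g) p.2‖ ≤
              ‖toFun' f p.1 - toFun' f p.2‖ + ‖toFun' g p.1 - toFun' g p.2‖ := by
            rw [toFun'_add, Pi.add_apply, Pi.add_apply, add_sub_add_comm]
            exact norm_add_le _ _
          calc ‖toFun' (f + g) p.1 - toFun' (f + g) p.2‖ / dist p.1 p.2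
              ≤ (‖toFun' f p.1 - toFun' f p.2‖ +
                  ‖toFun' g p.1 - toFun' g p.2‖) / dist p.1 p.2 := by gcongr
            _ = ‖toFun' f p.1 - toFun' f p.2‖ / dist p.1 p.2 +
                  ‖toFun' g p.1 - toFun' g p.2‖ / dist p.1 p.2 := add_div _ _ _
            _ ≤ lipNorm X x₀ F f + lipNorm X x₀ F g :=
                add_le_add (ratio_le_lipNorm f p) (ratio_le_lipNorm g p)
      neg' := by
        intro f
        simp only [lipNorm]
        congr 1
        funext p
        congr 1
        rw [toFun'_neg, Pi.neg_apply, Pi.neg_apply, neg_sub_neg, norm_sub_rev]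
      eq_zero_of_map_eq_zero' := by
        intro f hf
        have hzero : ∀ x : X, toFun' f x = 0 := by
          intro x
          rcases eq_or_ne x x₀ with h | h
          · rw [h]; exact apply_base f
          · have hf' : lipNorm X x₀ F f = 0 := hf
            have h1 := ratio_le_lipNorm (x₀ := x₀) f (x, x₀)
            rw [hf', div_le_iff₀ (dist_pos.2 h), zero_mul] at h1
            have h2 : toFun' f x - toFun' f x₀ = 0 := by
              simpa using norm_le_zero_iff.1 h1
            have h3 := apply_base f
            rw [h3, sub_zero] at h2
            exact h2
        exact Subtype.ext (funext hzero) }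

lemma lip0_norm_def (f : lip0 X x₀ F) : ‖f‖ = lipNorm X x₀ F f := rfl

instance : NormedSpace ℝ (lip0 X x₀ F) where
  norm_smul_le c f := by
    haveI : Nonempty (X × X) := nonempty_pairs x₀
    rw [lip0_norm_def, lip0_norm_def, lipNorm]
    apply ciSup_le
    intro p
    have h1 : toFun' (c • f) p.1 - toFun' (c • f) p.2 =
        c • (toFun' f p.1 - toFun' f p.2) := by
      rw [toFun'_smul, Pi.smul_apply, Pi.smul_apply, smul_sub]
    rw [h1, norm_smul]
    rcases eq_or_ne p.1 p.2 with h | h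
    · simp only [h, dist_self, div_zero]
      exact mul_nonneg (norm_nonneg c) (lipNorm_nonneg f)
    · rw [mul_div_assoc]
      exact mul_le_mul_of_nonneg_left (ratio_le_lipNorm (x₀ := x₀) f p) (norm_nonneg c)

variable (X x₀ F)

/-- Elements of `Lip₀(X, F)` as continuous maps. -/
def toCM (f : lip0 X x₀ F) : C(X, F) :=
  ⟨toFun' f, by
    obtain ⟨K, hK⟩ := exists_lip f
    exact hK.continuous⟩

/-- The compact-open topology `τ₀` on `Lip₀(X, F)`. -/
def tau0 : TopologicalSpace (lip0 X x₀ F) :=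
  TopologicalSpace.induced (toCM X x₀ F) ContinuousMap.compactOpen

/-- The set `γ(U) = ⋃ₙ (U₀ ∩ B + U₁ ∩ 2B + ⋯ + Uₙ ∩ 2ⁿB)` from the definition of the
mixed topology, where `B` is the closed unit ball of `Lip₀(X, F)`. -/
def gammaSet (U : ℕ → Set (lip0 X x₀ F)) : Set (lip0 X x₀ F) :=
  ⋃ n : ℕ, ∑ i ∈ Finset.range (n + 1), (U i ∩ {f | ‖f‖ ≤ 2 ^ i})

/-- The mixed topology `τ_γ = γ[Lip, τ₀]` on `Lip₀(X, F)`: the topology whose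
neighborhoods of a point `f` are generated by the translates by `f` of the sets `γ(U)`,
where `U` runs over all sequences of convex balanced `τ₀`-neighborhoods of zero. -/
def tauGamma : TopologicalSpace (lip0 X x₀ F) :=
  TopologicalSpace.mkOfNhds fun f =>
    ⨅ (U : ℕ → Set (lip0 X x₀ F))
      (_ : ∀ n, U n ∈ @nhds _ (tau0 X x₀ F) 0 ∧ Convex ℝ (U n) ∧ Balanced ℝ (U n)),
      Filter.principal ((f + ·) '' gammaSet X x₀ F U)

/-- A subset of `Lip₀(X, F)` is norm bounded if the Lipschitz norms of its members are
uniformly bounded. -/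
def NormBounded (B : Set (lip0 X x₀ F)) : Prop :=
  ∃ C : ℝ, ∀ f ∈ B, ‖f‖ ≤ C

/-- The locally convex topology `γτ_γ` on `Lip₀(X, F)`, generated by the seminorms
`f ↦ sup_n αₙ ‖f xₙ - f yₙ‖ / d(xₙ, yₙ)` where `(αₙ)` is a sequence of positive reals
tending to zero and `((xₙ, yₙ))` is a sequence of pairs of distinct points of `X`. -/
def gammaTauGamma : TopologicalSpace (lip0 X x₀ F) :=
  ⨅ (α : ℕ → ℝ) (z : ℕ → X × X)
    (_ : (∀ n, 0 < α n) ∧ Filter.Tendsto α Filter.atTop (nhds 0) ∧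
      ∀ n, (z n).1 ≠ (z n).2),
    TopologicalSpace.induced
      (fun f => UniformFun.ofFun fun n =>
        (α n / dist (z n).1 (z n).2) • (toFun' f (z n).1 - toFun' f (z n).2))
      inferInstance

/-- Evaluation at a point of `X`, as a linear functional on `Lip₀(X)`. -/
def evalLM (x : X) : lip0 X x₀ ℝ →ₗ[ℝ] ℝ where
  toFun f := toFun' f x
  map_add' f g := rfl
  map_smul' c f := rfl

/-- Evaluation at a point of `X`, as a continuous linear functional on `Lip₀(X)`. -/
def evalCLM (x : X) : lip0 X x₀ ℝ →L[ℝ] ℝ :=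
  LinearMap.mkContinuous (evalLM X x₀ x) (dist x x₀)
    (fun f => by
      have h0 : toFun' f x₀ = 0 := apply_base f
      have h := norm_sub_le_lipNorm (x₀ := x₀) f x x₀
      rw [h0, sub_zero] at h
      calc ‖evalLM X x₀ x f‖ ≤ lipNorm X x₀ ℝ f * dist x x₀ := h
        _ = dist x x₀ * ‖f‖ := by rw [lip0_norm_def, mul_comm])

/-- The Lipschitz-free space `F(X)`: the closed linear span of the evaluation
functionals inside the dual of `Lip₀(X)`. -/
def freeSpace : Submodule ℝ (lip0 X x₀ ℝ →L[ℝ] ℝ) :=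
  (Submodule.span ℝ (Set.range (evalCLM X x₀))).topologicalClosure

/-- The Dirac map `δ : X → F(X)`. -/
def deltaF (x : X) : freeSpace X x₀ :=
  ⟨evalCLM X x₀ x,
    Submodule.le_topologicalClosure _ (Submodule.subset_span (Set.mem_range_self x))⟩

/-- For a normed space `G`, the topology on the dual `G'` of uniform convergence on the
convex balanced compact subsets of `G` (the topology of `G'_c`). -/
def dualcTop (G : Type*) [NormedAddCommGroup G] [NormedSpace ℝ G] :
    TopologicalSpace (G →L[ℝ] ℝ) :=
  TopologicalSpace.induced
    (fun φ => UniformOnFun.ofFun {L : Set G | IsCompact L ∧ Convex ℝ L ∧ Balanced ℝ L} ⇑φ)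
    inferInstance


/-! A `τ_γ`-null sequence lies eventually in every `γ(U)`. Taking for `U` the `τ₀`-balls
around one compact set with geometrically shrinking radii forces `τ₀`-convergence.
If the sequence were unbounded, pick `f_{n_k}` with `n_k ≥ k` and a pair `(x_k, y_k)` on which
its difference quotient exceeds `2^(k+1)`, and let `U_i` be tiny at the points `x_k, y_k`,
`k ≤ i`. In a decomposition `f_{n_k} = ∑ cᵢ` with `cᵢ ∈ Uᵢ ∩ 2ⁱB`, the summands with `i < k`
contribute at most `2ⁱ` to the quotient at `(x_k, y_k)` and the others a geometric tail, so
the quotient is at most `2^k` and no `f_{n_k}` lies in `γ(U)`. Conversely, a bounded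
`τ₀`-null sequence eventually lies in a single summand `U_m ∩ 2^m B` of `γ(U)`. -/

lemma sum_range_half_pow_succ_le_one (n : ℕ) :
    ∑ i ∈ Finset.range n, (1 / 2 : ℝ) ^ (i + 1) ≤ 1 := by
  have := sum_geometric_two_le n
  simp only [pow_succ, ← Finset.sum_mul]
  linarith

lemma sum_range_ite_two_pow_le (M n : ℕ) :
    ∑ i ∈ Finset.range n, (if i < M then (2 : ℝ) ^ i else (1 / 2) ^ (i + 1)) ≤ 2 ^ M := by
  rw [Finset.sum_ite]
  have hhead : ∑ i ∈ (Finset.range n).filter (· < M), (2 : ℝ) ^ i ≤ 2 ^ M - 1 := by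
    refine (Finset.sum_le_sum_of_subset_of_nonneg (t := Finset.range M) (fun i hi => ?_)
      fun _ _ _ => by positivity).trans ?_
    · simpa using (Finset.mem_filter.1 hi).2
    · rw [geom_sum_eq (by norm_num : (2 : ℝ) ≠ 1)]
      norm_num
  have htail : ∑ i ∈ (Finset.range n).filter (¬ · < M), (1 / 2 : ℝ) ^ (i + 1) ≤ 1 :=
    (Finset.sum_le_sum_of_subset_of_nonneg (Finset.filter_subset _ _)
      fun _ _ _ => by positivity).trans (sum_range_half_pow_succ_le_one n)
  linarith

section MixedTopology

variable {X x₀ F}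

def evalₗ (x : X) : lip0 X x₀ F →ₗ[ℝ] F where
  toFun f := toFun' f x
  map_add' _ _ := rfl
  map_smul' _ _ := rfl

@[simp]
lemma evalₗ_apply (x : X) (f : lip0 X x₀ F) : evalₗ x f = toFun' f x := rfl

def compactBall (K : Set X) (ε : ℝ) : Set (lip0 X x₀ F) :=
  ⋂ x ∈ K, evalₗ x ⁻¹' Metric.ball 0 ε

lemma mem_compactBall {K : Set X} {ε : ℝ} {g : lip0 X x₀ F} :
    g ∈ compactBall K ε ↔ ∀ x ∈ K, ‖toFun' g x‖ < ε := by
  simp [compactBall]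

lemma compactBall_mem_nhds_tau0 {K : Set X} (hK : IsCompact K) {ε : ℝ} (hε : 0 < ε) :
    compactBall K ε ∈ @nhds _ (tau0 X x₀ F) 0 := by
  rw [tau0, mem_nhds_induced]
  refine ⟨{h : C(X, F) | MapsTo h K (Metric.ball 0 ε)},
    (ContinuousMap.isOpen_setOfPred_mapsTo hK Metric.isOpen_ball).mem_nhds fun x _ => ?_,
    fun g hg => mem_compactBall.2 fun x hx => mem_ball_zero_iff.1 (hg hx)⟩
  simpa [toCM, toFun'_zero] using hε

lemma tendsto_tau0_zero_of_eventually_mem_compactBall {ι : Type*} {l : Filter ι}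
    {f : ι → lip0 X x₀ F}
    (h : ∀ K, IsCompact K → ∀ ε > 0, ∀ᶠ n in l, f n ∈ compactBall K ε) :
    Tendsto f l (@nhds _ (tau0 X x₀ F) 0) := by
  rw [tau0, nhds_induced, tendsto_comap_iff,
    ContinuousMap.tendsto_iff_forall_isCompact_tendstoUniformlyOn]
  intro K hK
  rw [Metric.tendstoUniformlyOn_iff]
  intro ε hε
  filter_upwards [h K hK ε hε] with n hn x hx
  simpa [toCM, toFun'_zero] using mem_compactBall.1 hn x hx

variable (x₀ F) in
/-- The sequences `U` indexing the sets `γ(U)` in the definition of `tauGamma`. -/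
def GammaAdmissible (U : ℕ → Set (lip0 X x₀ F)) : Prop :=
  ∀ n, U n ∈ @nhds _ (tau0 X x₀ F) 0 ∧ Convex ℝ (U n) ∧ Balanced ℝ (U n)

lemma gammaAdmissible_compactBall {K : ℕ → Set X} {ε : ℕ → ℝ} (hK : ∀ i, IsCompact (K i))
    (hε : ∀ i, 0 < ε i) :
    GammaAdmissible x₀ F fun i => compactBall (K i) (ε i) := fun i =>
  ⟨compactBall_mem_nhds_tau0 (hK i) (hε i),
    convex_iInter₂ fun x _ => (convex_ball (0 : F) (ε i)).linear_preimage (evalₗ x),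
    balanced_iInter₂ fun x _ =>
      balanced_ball_zero.mulActionHom_preimage (evalₗ x).toMulActionHom⟩

namespace GammaAdmissible

variable {U V : ℕ → Set (lip0 X x₀ F)}

lemma zero_mem (hU : GammaAdmissible x₀ F U) (i : ℕ) : (0 : lip0 X x₀ F) ∈ U i :=
  @mem_of_mem_nhds _ (tau0 X x₀ F) _ _ (hU i).1

lemma inter (hU : GammaAdmissible x₀ F U) (hV : GammaAdmissible x₀ F V) :
    GammaAdmissible x₀ F fun i => U i ∩ V i := fun i =>
  ⟨Filter.inter_mem (hU i).1 (hV i).1, (hU i).2.1.inter (hV i).2.1, (hU i).2.2.inter (hV i).2.2⟩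

lemma shift (hU : GammaAdmissible x₀ F U) (m : ℕ) : GammaAdmissible x₀ F fun i => U (m + i) :=
  fun i => hU (m + i)

end GammaAdmissible

variable {U V : ℕ → Set (lip0 X x₀ F)}

lemma gammaSet_mono (h : ∀ n, U n ⊆ V n) : gammaSet X x₀ F U ⊆ gammaSet X x₀ F V :=
  iUnion_mono fun _ => Set.finsetSum_subset_finsetSum _ _ _ fun i _ =>
    inter_subset_inter_left _ (h i)

lemma mem_gammaSet_of_mem (hU : ∀ i, (0 : lip0 X x₀ F) ∈ U i) {g : lip0 X x₀ F} {m : ℕ}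
    (hg : g ∈ U m) (hgm : ‖g‖ ≤ 2 ^ m) : g ∈ gammaSet X x₀ F U := by
  refine mem_iUnion.2 ⟨m, ?_⟩
  have := Set.finsetSum_mem_finsetSum (Finset.range (m + 1))
    (fun i => U i ∩ {f | ‖f‖ ≤ 2 ^ i}) (fun i => if i = m then g else 0) fun i _ => by
      split_ifs with hi
      · exact hi ▸ ⟨hg, hgm⟩
      · exact ⟨hU i, show ‖(0 : lip0 X x₀ F)‖ ≤ 2 ^ i by rw [norm_zero]; positivity⟩
  simpa [Finset.sum_ite_eq'] using this

lemma add_mem_gammaSet {m : ℕ} {g h : lip0 X x₀ F}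
    (hg : g ∈ ∑ i ∈ Finset.range (m + 1), (U i ∩ {f | ‖f‖ ≤ 2 ^ i}))
    (hh : h ∈ gammaSet X x₀ F fun i => U (m + 1 + i)) : g + h ∈ gammaSet X x₀ F U := by
  obtain ⟨l, hl⟩ := mem_iUnion.1 hh
  refine mem_iUnion.2 ⟨m + 1 + l, ?_⟩
  rw [show m + 1 + l + 1 = m + 1 + (l + 1) by omega, Finset.sum_range_add]
  refine Set.add_mem_add hg (Set.finsetSum_subset_finsetSum _ _ _ (fun i _ => ?_) hl)
  exact inter_subset_inter_right _ fun f (hf : ‖f‖ ≤ 2 ^ i) =>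
    hf.trans (pow_le_pow_right₀ one_le_two (Nat.le_add_left i (m + 1)))

lemma nhds_tauGamma_hasBasis (a : lip0 X x₀ F) :
    (@nhds _ (tauGamma X x₀ F) a).HasBasis (GammaAdmissible x₀ F)
      fun U => (a + ·) '' gammaSet X x₀ F U := by
  have hb : ∀ a : lip0 X x₀ F,
      (⨅ (U) (_ : GammaAdmissible x₀ F U), 𝓟 ((a + ·) '' gammaSet X x₀ F U)).HasBasis
        (GammaAdmissible x₀ F) fun U => (a + ·) '' gammaSet X x₀ F U := fun a =>
    hasBasis_biInf_principal'
      (fun U hU V hV => ⟨_, hU.inter hV, image_mono (gammaSet_mono fun _ => inter_subset_left),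
        image_mono (gammaSet_mono fun _ => inter_subset_right)⟩)
      ⟨fun _ => univ, fun _ => ⟨univ_mem, convex_univ, balanced_univ⟩⟩
  have hpure : ∀ a U, GammaAdmissible x₀ F U → a ∈ (a + ·) '' gammaSet X x₀ F U :=
    fun a U hU => ⟨0, mem_gammaSet_of_mem hU.zero_mem (hU.zero_mem 0) (by simp), add_zero a⟩
  have hopen : ∀ a U, GammaAdmissible x₀ F U → ∀ᶠ b in ⨅ (V) (_ : GammaAdmissible x₀ F V),
      𝓟 ((a + ·) '' gammaSet X x₀ F V), (a + ·) '' gammaSet X x₀ F U ∈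
        ⨅ (V) (_ : GammaAdmissible x₀ F V), 𝓟 ((b + ·) '' gammaSet X x₀ F V) := by
    refine fun a U hU => eventually_of_mem ((hb a).mem_of_mem hU) ?_
    rintro _ ⟨g, hg, rfl⟩
    obtain ⟨m, hm⟩ := mem_iUnion.1 hg
    refine (hb (a + g)).mem_iff.2 ⟨_, hU.shift (m + 1), ?_⟩
    rintro _ ⟨h, hh, rfl⟩
    exact ⟨g + h, add_mem_gammaSet hm hh, (add_assoc a g h).symm⟩
  exact (TopologicalSpace.nhds_mkOfNhds_of_hasBasis hb hpure hopen a).symm ▸ hb a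

lemma tendsto_tauGamma_zero_iff {ι : Type*} {l : Filter ι} {f : ι → lip0 X x₀ F} :
    Tendsto f l (@nhds _ (tauGamma X x₀ F) 0) ↔
      ∀ U, GammaAdmissible x₀ F U → ∀ᶠ n in l, f n ∈ gammaSet X x₀ F U := by
  simpa only [zero_add, image_id'] using
    (nhds_tauGamma_hasBasis (0 : lip0 X x₀ F)).tendsto_right_iff

lemma exists_norm_le_sum_of_mem_gammaSet {G : Type*} [SeminormedAddCommGroup G] [Module ℝ G]
    (L : lip0 X x₀ F →ₗ[ℝ] G) {g : lip0 X x₀ F} (hg : g ∈ gammaSet X x₀ F U) {b : ℕ → ℝ}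
    (hb : ∀ i, ∀ c ∈ U i, ‖c‖ ≤ 2 ^ i → ‖L c‖ ≤ b i) :
    ∃ n, ‖L g‖ ≤ ∑ i ∈ Finset.range n, b i := by
  obtain ⟨n, hn⟩ := mem_iUnion.1 hg
  obtain ⟨c, hc, rfl⟩ := (Set.mem_finsetSum _ _ _).1 hn
  refine ⟨n + 1, ?_⟩
  rw [map_sum]
  exact (norm_sum_le _ _).trans (Finset.sum_le_sum fun i hi => hb i (c i) (hc hi).1 (hc hi).2)

lemma exists_lt_norm_sub_of_lt_norm (g : lip0 X x₀ F) {r : ℝ} (hr : 0 ≤ r) (h : r < ‖g‖) :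
    ∃ x y, r * dist x y < ‖toFun' g x - toFun' g y‖ := by
  have := nonempty_pairs x₀
  rw [lip0_norm_def, lipNorm, lt_ciSup_iff (bddAbove_ratio g)] at h
  obtain ⟨⟨x, y⟩, hxy⟩ := h
  have hd : 0 < dist x y := dist_pos.2 fun hxy' => by
    simp only [hxy', sub_self, norm_zero, dist_self, div_zero] at hxy
    linarith
  exact ⟨x, y, (lt_div_iff₀ hd).1 hxy⟩

lemma norm_sub_le_of_mem_gammaSet {g : lip0 X x₀ F} (hg : g ∈ gammaSet X x₀ F U) {x y : X}
    {M : ℕ} (hU : ∀ i, M ≤ i → ∀ c ∈ U i,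
      ‖toFun' c x - toFun' c y‖ ≤ (1 / 2) ^ (i + 1) * dist x y) :
    ‖toFun' g x - toFun' g y‖ ≤ 2 ^ M * dist x y := by
  obtain ⟨n, hn⟩ := exists_norm_le_sum_of_mem_gammaSet (evalₗ x - evalₗ y) hg
    (b := fun i => (if i < M then (2 : ℝ) ^ i else (1 / 2) ^ (i + 1)) * dist x y)
    fun i c hc hci => by
      split_ifs with hi
      · exact (norm_sub_le_lipNorm c x y).trans (mul_le_mul_of_nonneg_right hci dist_nonneg)
      · exact hU i (not_lt.1 hi) c hc
  rw [← Finset.sum_mul] at hn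
  exact hn.trans (mul_le_mul_of_nonneg_right (sum_range_ite_two_pow_le M n) dist_nonneg)

lemma exists_gammaAdmissible_forall_notMem (g : ℕ → lip0 X x₀ F)
    (hg : ∀ k, (2 : ℝ) ^ (k + 1) < ‖g k‖) :
    ∃ U, GammaAdmissible x₀ F U ∧ ∀ k, g k ∉ gammaSet X x₀ F U := by
  choose x y hxy using fun k => exists_lt_norm_sub_of_lt_norm (g k) (by positivity) (hg k)
  have hd : ∀ k, 0 < dist (x k) (y k) := fun k => dist_pos.2 fun h => by
    simpa [h] using hxy k
  set ε : ℕ → ℝ := fun i => (1 / 2) ^ (i + 2) *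
    (Finset.range (i + 1)).inf' Finset.nonempty_range_add_one fun k => dist (x k) (y k)
  have hε : ∀ i, 0 < ε i := fun i =>
    mul_pos (by positivity) ((Finset.lt_inf'_iff _).2 fun k _ => hd k)
  have hεd : ∀ k i, k ≤ i → 2 * ε i ≤ (1 / 2) ^ (i + 1) * dist (x k) (y k) := fun k i hki => by
    have := Finset.inf'_le (fun k => dist (x k) (y k)) (Finset.mem_range_succ_iff.2 hki)
    calc 2 * ε i = (1 / 2) ^ (i + 1) * (Finset.range (i + 1)).inf' _ _ := by
          simp only [ε, pow_succ]; ring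
      _ ≤ _ := by gcongr
  let K : ℕ → Set X := fun i => x '' Iic i ∪ y '' Iic i
  have hK : ∀ i, IsCompact (K i) := fun i =>
    (((finite_Iic i).image x).union ((finite_Iic i).image y)).isCompact
  refine ⟨_, gammaAdmissible_compactBall hK hε, fun k hk => ?_⟩
  have hle := norm_sub_le_of_mem_gammaSet hk (M := k) fun i hki c hc => by
    have hxc := mem_compactBall.1 hc (x k) (Or.inl ⟨k, hki, rfl⟩)
    have hyc := mem_compactBall.1 hc (y k) (Or.inr ⟨k, hki, rfl⟩)
    calc ‖toFun' c (x k) - toFun' c (y k)‖ ≤ ‖toFun' c (x k)‖ + ‖toFun' c (y k)‖ :=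
          norm_sub_le _ _
      _ ≤ 2 * ε i := by rw [two_mul]; exact (add_lt_add hxc hyc).le
      _ ≤ _ := hεd k i hki
  have hlt := hxy k
  have hpos : 0 < (2 : ℝ) ^ k * dist (x k) (y k) := mul_pos (by positivity) (hd k)
  rw [pow_succ] at hlt
  linarith

lemma isBoundedUnder_norm_of_forall_gammaSet {f : ℕ → lip0 X x₀ F}
    (H : ∀ U, GammaAdmissible x₀ F U → ∀ᶠ n in atTop, f n ∈ gammaSet X x₀ F U) :
    IsBoundedUnder (· ≤ ·) atTop fun n => ‖f n‖ := by
  by_contra hf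
  have hfreq : ∀ k, ∃ n, k ≤ n ∧ (2 : ℝ) ^ (k + 1) < ‖f n‖ := fun k => by
    simp only [IsBoundedUnder, IsBounded, eventually_map, not_exists, not_eventually,
      not_le] at hf
    exact frequently_atTop.1 (hf _) k
  choose n hkn hn using hfreq
  obtain ⟨U, hU, hnot⟩ := exists_gammaAdmissible_forall_notMem (f ∘ n) hn
  obtain ⟨M, hM⟩ := eventually_atTop.1 (H U hU)
  exact hnot M (hM _ (hkn M))

lemma tendsto_tau0_zero_of_forall_gammaSet {ι : Type*} {l : Filter ι} {f : ι → lip0 X x₀ F}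
    (H : ∀ U, GammaAdmissible x₀ F U → ∀ᶠ n in l, f n ∈ gammaSet X x₀ F U) :
    Tendsto f l (@nhds _ (tau0 X x₀ F) 0) := by
  refine tendsto_tau0_zero_of_eventually_mem_compactBall fun K hK ε hε => ?_
  have hU := gammaAdmissible_compactBall (x₀ := x₀) (F := F) (fun _ => hK)
    fun i => (by positivity : 0 < ε / 2 * (1 / 2) ^ (i + 1))
  filter_upwards [H _ hU] with n hn
  refine mem_compactBall.2 fun x hx => ?_
  obtain ⟨m, hm⟩ := exists_norm_le_sum_of_mem_gammaSet (evalₗ x) hn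
    fun i c hc _ => (mem_compactBall.1 hc x hx).le
  rw [← Finset.mul_sum] at hm
  exact hm.trans_lt ((mul_le_of_le_one_right (by positivity)
    (sum_range_half_pow_succ_le_one m)).trans_lt (half_lt_self hε))

end MixedTopology

/-- A sequence in `Lip₀(X)` converges to zero in the topology `τ_γ`
iff it is bounded in the Lipschitz norm and converges to zero in the compact-open
topology `τ₀`. -/
theorem stmt2 (X : Type*) [MetricSpace X] (x₀ : X) (f : ℕ → lip0 X x₀ ℝ) :
    Filter.Tendsto f Filter.atTop (@nhds _ (tauGamma X x₀ ℝ) 0) ↔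
      (∃ C : ℝ, ∀ n, ‖f n‖ ≤ C) ∧
        Filter.Tendsto f Filter.atTop (@nhds _ (tau0 X x₀ ℝ) 0) := by
  rw [tendsto_tauGamma_zero_iff]
  constructor
  · intro H
    obtain ⟨C, hC⟩ := (isBoundedUnder_norm_of_forall_gammaSet H).bddAbove_range
    exact ⟨⟨C, fun n => hC ⟨n, rfl⟩⟩, tendsto_tau0_zero_of_forall_gammaSet H⟩
  · rintro ⟨⟨C, hC⟩, hf⟩ U hU
    obtain ⟨m, hm⟩ := pow_unbounded_of_one_lt C one_lt_two
    filter_upwards [hf.eventually_mem (hU m).1] with n hn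
    exact mem_gammaSet_of_mem hU.zero_mem hn ((hC n).trans hm.le)

end LipApprox
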